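/- Let d ≥ 2 and let J be a 1-dependent hard-core process on the d-ray star graph S^d with marginals p. For n_i ≥ 0 and words x_i = (x_{i1},...,x_{in_i}) ∈ {0,1}^{n_i} (i = 1,...,d), write P_i(x_i) := P(J_{v_{ik}} = x_{ik} for 1 ≤ k ≤ n_i) and let x̂_i := (x_{i2},...,x_{in_i}) (with P_i(empty word) := 1). Then: (1) if x_{i1} = 1 for some i with n_i ≥ 1, then P(J_{v_0} = 0 and J_{v_{ik}} = x_{ik} for all i, k) = ∏_{i=1}^d P_i(x_i); (2) if x_{i1} = 0 whenever n_i ≥ 1, then P(J_{v_0} = 1 and J_{v_{ik}} = x_{ik} for all i, k) = p·∏_{i=1}^d P_i(x̂_i); (3) if x_{i1} = 0 whenever n_i ≥ 1, then P(J_{v_0} = 0 and J_{v_{ik}} = x_{ik} for all i, k) = ∏_{i=1}^d P_i(x_i) − p·∏_{i=1}^d P_i(x̂_i). -/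

import Mathlib

open MeasureTheory ProbabilityTheory

/-- A process `X` indexed by the vertices of a graph `G` is *1-dependent* if its
restrictions to any two vertex sets at graph distance greater than 1 (i.e. containing
no common and no adjacent vertices) are independent. -/
def OneDependent {V E Ω : Type*} [MeasurableSpace E] (G : SimpleGraph V)
    [MeasurableSpace Ω] (μ : Measure Ω) (X : V → Ω → E) : Prop :=
  ∀ A B : Set V, (∀ a ∈ A, ∀ b ∈ B, a ≠ b ∧ ¬G.Adj a b) →
    IndepFun (fun ω (a : A) => X a.1 ω) (fun ω (b : B) => X b.1 ω) μ

/-- A `{0,1}`-valued process is a *hard-core process* on `G` if almost surely no two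
adjacent vertices both take the value `1` (`true`). -/
def HardCore {V Ω : Type*} (G : SimpleGraph V) [MeasurableSpace Ω]
    (μ : Measure Ω) (J : V → Ω → Bool) : Prop :=
  ∀ u v, G.Adj u v → μ {ω | J u ω = true ∧ J v ω = true} = 0

/-- The critical point `p_h(G)`: the supremum of all `p` for which a 1-dependent
hard-core process on `G` with marginals `P(J_v = 1) = p` exists. -/
noncomputable def pCrit {V : Type*} (G : SimpleGraph V) : ℝ :=
  sSup {p : ℝ | ∃ (Ω : Type) (_ : MeasurableSpace Ω) (μ : Measure Ω),
    IsProbabilityMeasure μ ∧ ∃ J : V → Ω → Bool,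
      (∀ v, Measurable (J v)) ∧ HardCore G μ J ∧ OneDependent G μ J ∧
      ∀ v, (μ {ω | J v ω = true}).toReal = p}

/-- The `d`-ray star graph: a distinguished vertex `none`, and `d` infinite rays;
`some (i, k)` is the `(k+1)`-st vertex of ray `i`. -/
def starGraph (d : ℕ) : SimpleGraph (Option (Fin d × ℕ)) :=
  SimpleGraph.fromRel (fun u v =>
    (∃ i, u = none ∧ v = some (i, 0)) ∨ (∃ i k, u = some (i, k) ∧ v = some (i, k + 1)))

open scoped BigOperators

/-!
Along an induced path, a 1-dependent hard-core process with constant marginals `p` has its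
word probabilities determined by `p` alone: a word starting with `11` is null, `10w` has
probability `p · P(w)` by 1-dependence, and `0w` has probability `P(w) - P(1w)`. In particular
the word probabilities along a ray of the star do not change when the ray is shifted.

Distinct rays are at distance at least 2, as are the centre and the rays with their first
vertices removed, so the corresponding events factorize. If some ray starts with `1`, the centre
is a.s. `0`. Otherwise, on the event that the centre is `1` the first vertices are a.s. `0`, so
this event is a.s. the centre together with the shortened rays, of probability
`p · ∏ P_i(x̂_i)`; the third identity follows by subtracting the second from `∏ P_i(x_i)`.
-/

theorem measurableSet_setOf_forall_apply_eq {S α : Type*} [Countable α] {R : α → Prop}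
    (u : ∀ j, R j → S) (e : α → Bool) :
    MeasurableSet {g : S → Bool | ∀ j (h : R j), g (u j h) = e j} := by
  simp only [Set.ofPred_forall]
  exact .iInter fun j => .iInter fun h => measurable_pi_apply _ (measurableSet_singleton _)

theorem measure_true_inter_add_false_inter {Ω : Type*} [MeasurableSpace Ω] {μ : Measure Ω}
    {f : Ω → Bool} (hf : Measurable f) (s : Set Ω) :
    μ ({ω | f ω = true} ∩ s) + μ ({ω | f ω = false} ∩ s) = μ s := by
  rw [← measure_inter_add_sdiff s (hf (measurableSet_singleton true))]
  congr 2 <;> ext ω <;> simp [and_comm]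

section OneDependent

variable {V Ω : Type*} [MeasurableSpace Ω] {μ : Measure Ω} {G : SimpleGraph V}
  {J : V → Ω → Bool}

theorem OneDependent.measure_inter_eq_mul (hdep : OneDependent G μ J)
    {ι κ : Type*} [Countable ι] [Countable κ] {v : ι → V} {w : κ → V}
    {P : ι → Prop} {Q : κ → Prop}
    (hsep : ∀ j, P j → ∀ l, Q l → v j ≠ w l ∧ ¬G.Adj (v j) (w l))
    (b : ι → Bool) (c : κ → Bool) :
    μ ({ω | ∀ j, P j → J (v j) ω = b j} ∩ {ω | ∀ l, Q l → J (w l) ω = c l})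
      = μ {ω | ∀ j, P j → J (v j) ω = b j} * μ {ω | ∀ l, Q l → J (w l) ω = c l} := by
  let A : Set V := {u | ∃ j, P j ∧ v j = u}
  let B : Set V := {u | ∃ l, Q l ∧ w l = u}
  have hAB : ∀ a ∈ A, ∀ b ∈ B, a ≠ b ∧ ¬G.Adj a b := by
    rintro _ ⟨j, hj, rfl⟩ _ ⟨l, hl, rfl⟩
    exact hsep j hj l hl
  exact indepFun_iff_measure_inter_preimage_eq_mul.mp (hdep A B hAB) _ _
    (measurableSet_setOf_forall_apply_eq (fun j hj => (⟨v j, j, hj, rfl⟩ : A)) b)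
    (measurableSet_setOf_forall_apply_eq (fun l hl => (⟨w l, l, hl, rfl⟩ : B)) c)

theorem OneDependent.measure_vertex_inter_eq_mul (hdep : OneDependent G μ J) {u : V}
    {κ : Type*} [Countable κ] {w : κ → V} {Q : κ → Prop}
    (hsep : ∀ l, Q l → u ≠ w l ∧ ¬G.Adj u (w l)) (a : Bool) (c : κ → Bool) :
    μ ({ω | J u ω = a} ∩ {ω | ∀ l, Q l → J (w l) ω = c l})
      = μ {ω | J u ω = a} * μ {ω | ∀ l, Q l → J (w l) ω = c l} := by
  simpa using hdep.measure_inter_eq_mul (v := fun _ : Unit => u) (P := fun _ => True)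
    (fun _ _ => hsep) (fun _ => a) c

theorem OneDependent.measure_setOf_forall_mem_eq_prod [IsProbabilityMeasure μ]
    (hdep : OneDependent G μ J) {α ι : Type*} [Countable α] [Countable ι]
    {v : α → ι → V} {Q : α → ι → Prop}
    (hsep : ∀ a a', a ≠ a' → ∀ j, Q a j → ∀ l, Q a' l →
      v a j ≠ v a' l ∧ ¬G.Adj (v a j) (v a' l))
    (b : α → ι → Bool) (S : Finset α) :
    μ {ω | ∀ a ∈ S, ∀ j, Q a j → J (v a j) ω = b a j}
      = ∏ a ∈ S, μ {ω | ∀ j, Q a j → J (v a j) ω = b a j} := by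
  classical
  induction S using Finset.induction_on with
  | empty => simp
  | @insert a S ha ih =>
    have hrest : {ω | ∀ p : α × ι, p.1 ∈ S ∧ Q p.1 p.2 → J (v p.1 p.2) ω = b p.1 p.2}
        = {ω | ∀ a' ∈ S, ∀ j, Q a' j → J (v a' j) ω = b a' j} := by
      ext ω
      exact ⟨fun h a' ha' j hj => h (a', j) ⟨ha', hj⟩, fun h p hp => h p.1 hp.1 p.2 hp.2⟩
    have hsep' : ∀ j, Q a j → ∀ p : α × ι, p.1 ∈ S ∧ Q p.1 p.2 →
        v a j ≠ v p.1 p.2 ∧ ¬G.Adj (v a j) (v p.1 p.2) :=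
      fun j hj p hp => hsep a p.1 (ne_of_mem_of_not_mem hp.1 ha).symm j hj p.2 hp.2
    simp only [Finset.forall_mem_insert, Set.ofPred_and]
    rw [← hrest, hdep.measure_inter_eq_mul hsep', hrest, ih, Finset.prod_insert ha]

end OneDependent

section WordEvent

variable {V Ω : Type*} {J : V → Ω → Bool}

def wordEvent (J : V → Ω → Bool) (v : ℕ → V) (L : ℕ) (y : ℕ → Bool) : Set Ω :=
  {ω | ∀ k < L, J (v k) ω = y k}

@[simp]
theorem wordEvent_zero (v : ℕ → V) (y : ℕ → Bool) : wordEvent J v 0 y = Set.univ := by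
  simp [wordEvent]

theorem wordEvent_succ (v : ℕ → V) (L : ℕ) (y : ℕ → Bool) :
    wordEvent J v (L + 1) y
      = {ω | J (v 0) ω = y 0} ∩ wordEvent J (fun k => v (k + 1)) L (fun k => y (k + 1)) := by
  ext ω
  simp only [wordEvent, Set.mem_inter_iff, Set.mem_ofPred_eq]
  constructor
  · intro h
    exact ⟨h 0 (by omega), fun k hk => h (k + 1) (by omega)⟩
  · rintro ⟨h0, h⟩ (_ | k) hk
    exacts [h0, h k (by omega)]

end WordEvent

section InducedRay

variable {V Ω : Type*} [MeasurableSpace Ω] {μ : Measure Ω} {G : SimpleGraph V}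
  {J : V → Ω → Bool}

def IsInducedRay (G : SimpleGraph V) (v : ℕ → V) : Prop :=
  (∀ k, G.Adj (v k) (v (k + 1))) ∧ ∀ k l, k + 2 ≤ l → v k ≠ v l ∧ ¬G.Adj (v k) (v l)

theorem IsInducedRay.shift {v : ℕ → V} (hv : IsInducedRay G v) (m : ℕ) :
    IsInducedRay G (fun k => v (k + m)) :=
  ⟨fun k => by simpa [Nat.add_right_comm] using hv.1 (k + m),
    fun k l hkl => hv.2 (k + m) (l + m) (by omega)⟩

theorem measure_wordEvent_add_update (hmeas : ∀ u, Measurable (J u))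
    (v : ℕ → V) (L : ℕ) (y : ℕ → Bool) :
    μ (wordEvent J v (L + 1) (Function.update y 0 false))
        + μ (wordEvent J v (L + 1) (Function.update y 0 true))
      = μ (wordEvent J (fun k => v (k + 1)) L (fun k => y (k + 1))) := by
  simp only [wordEvent_succ, Function.update_self, Function.update_apply, Nat.add_one_ne_zero,
    if_false]
  rw [add_comm]
  exact measure_true_inter_add_false_inter (hmeas (v 0)) _

theorem measure_wordEvent_true_true (hhc : HardCore G μ J) {v : ℕ → V} (hv : IsInducedRay G v)
    (L : ℕ) {y : ℕ → Bool} (h0 : y 0 = true) (h1 : y 1 = true) :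
    μ (wordEvent J v (L + 2) y) = 0 :=
  measure_mono_null (fun ω hω => And.intro (h0 ▸ hω 0 (by omega)) (h1 ▸ hω 1 (by omega)))
    (hhc _ _ (hv.1 0))

theorem measure_wordEvent_true_false (hhc : HardCore G μ J) (hdep : OneDependent G μ J)
    {v : ℕ → V} (hv : IsInducedRay G v) (L : ℕ) {y : ℕ → Bool} (h0 : y 0 = true)
    (h1 : y 1 = false) :
    μ (wordEvent J v (L + 2) y)
      = μ {ω | J (v 0) ω = true}
        * μ (wordEvent J (fun k => v (k + 2)) L (fun k => y (k + 2))) := by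
  unfold wordEvent
  rw [← hdep.measure_vertex_inter_eq_mul (fun l _ => hv.2 0 (l + 2) (by omega))]
  refine measure_eq_measure_of_null_sdiff ?_ (measure_mono_null ?_ (hhc _ _ (hv.1 0)))
  · intro ω hω
    exact ⟨h0 ▸ hω 0 (by omega), fun k hk => hω (k + 2) (by omega)⟩
  · rintro ω ⟨⟨hv0, htail⟩, hω⟩
    refine ⟨hv0, ?_⟩
    by_contra hv1
    refine hω fun k hk => ?_
    rcases k with _ | _ | k
    exacts [h0 ▸ hv0, h1 ▸ by simpa using hv1, htail k (by omega)]

theorem measure_wordEvent_eq_of_isInducedRay [IsFiniteMeasure μ] (hhc : HardCore G μ J)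
    (hdep : OneDependent G μ J) (hmeas : ∀ u, Measurable (J u))
    (hmarg : ∀ u u', μ {ω | J u ω = true} = μ {ω | J u' ω = true})
    {v w : ℕ → V} (hv : IsInducedRay G v) (hw : IsInducedRay G w) (L : ℕ) (y : ℕ → Bool) :
    μ (wordEvent J v L y) = μ (wordEvent J w L y) := by
  induction L using Nat.strong_induction_on generalizing v w y with
  | _ L ih =>
  rcases L with _ | L
  · simp
  have htrue : ∀ z : ℕ → Bool, z 0 = true →
      μ (wordEvent J v (L + 1) z) = μ (wordEvent J w (L + 1) z) := by
    intro z hz0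
    rcases L with _ | L
    · simp only [wordEvent_succ, wordEvent_zero, Set.inter_univ, hz0]
      exact hmarg _ _
    cases hz1 : z 1
    · rw [measure_wordEvent_true_false hhc hdep hv L hz0 hz1,
        measure_wordEvent_true_false hhc hdep hw L hz0 hz1, hmarg (v 0) (w 0),
        ih L (by omega) (hv.shift 2) (hw.shift 2)]
    · rw [measure_wordEvent_true_true hhc hv L hz0 hz1,
        measure_wordEvent_true_true hhc hw L hz0 hz1]
  cases hy0 : y 0
  · rw [← Function.update_eq_self 0 y, hy0]
    refine (ENNReal.add_left_inj (measure_ne_top μ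
      (wordEvent J v (L + 1) (Function.update y 0 true)))).mp ?_
    rw [measure_wordEvent_add_update hmeas v, htrue _ (Function.update_self ..),
      measure_wordEvent_add_update hmeas w, ih L (by omega) (hv.shift 1) (hw.shift 1)]
  · exact htrue y hy0

end InducedRay

section StarGraph

variable {d : ℕ}

@[simp]
theorem starGraph_adj_none_some {i : Fin d} {k : ℕ} :
    (starGraph d).Adj none (some (i, k)) ↔ k = 0 := by
  simp [starGraph]

@[simp]
theorem starGraph_adj_some_some {i j : Fin d} {k l : ℕ} :
    (starGraph d).Adj (some (i, k)) (some (j, l)) ↔ i = j ∧ (l = k + 1 ∨ k = l + 1) := by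
  simp only [starGraph, SimpleGraph.fromRel_adj]
  grind

theorem isInducedRay_starGraph (i : Fin d) :
    IsInducedRay (starGraph d) (fun k => some (i, k)) :=
  ⟨fun k => by simp, fun k l hkl => by simp; omega⟩

variable {Ω : Type*} [MeasurableSpace Ω] {μ : Measure Ω}
  {J : Option (Fin d × ℕ) → Ω → Bool}

theorem measure_rays_eq_prod [IsProbabilityMeasure μ] (hdep : OneDependent (starGraph d) μ J)
    (Q : Fin d → ℕ → Prop) (v : Fin d → ℕ → ℕ) (b : Fin d → ℕ → Bool) :
    μ {ω | ∀ i, ∀ k, Q i k → J (some (i, v i k)) ω = b i k}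
      = ∏ i, μ {ω | ∀ k, Q i k → J (some (i, v i k)) ω = b i k} := by
  simpa using hdep.measure_setOf_forall_mem_eq_prod (v := fun i k => some (i, v i k))
    (fun i i' hii' _ _ _ _ => by simp [hii']) b Finset.univ

theorem measure_center_true_inter_rays_eq_mul_tails (hhc : HardCore (starGraph d) μ J)
    (hdep : OneDependent (starGraph d) μ J) {n : Fin d → ℕ} {x : Fin d → ℕ → Bool}
    (hx : ∀ i, 1 ≤ n i → x i 0 = false) :
    μ ({ω | J none ω = true} ∩ {ω | ∀ i, ∀ k < n i, J (some (i, k)) ω = x i k})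
      = μ {ω | J none ω = true}
        * μ {ω | ∀ i, ∀ k, k + 1 < n i → J (some (i, k + 1)) ω = x i (k + 1)} := by
  have hind := hdep.measure_vertex_inter_eq_mul (u := none)
    (w := fun p : Fin d × ℕ => some (p.1, p.2 + 1)) (Q := fun p => p.2 + 1 < n p.1)
    (by simp) true (fun p => x p.1 (p.2 + 1))
  simp only [Prod.forall] at hind
  rw [← hind]
  refine measure_eq_measure_of_null_sdiff ?_
    (measure_mono_null ?_ (measure_iUnion_null fun i => hhc none (some (i, 0)) (by simp)))
  · exact fun ω ⟨hc, hω⟩ => ⟨hc, fun i k hk => hω i (k + 1) hk⟩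
  · rintro ω ⟨⟨hc, htail⟩, hω⟩
    simp only [Set.mem_inter_iff, Set.mem_ofPred_eq, hc, true_and, not_forall] at hω
    obtain ⟨i, k, hk, hne⟩ := hω
    rcases k with _ | k
    · exact Set.mem_iUnion.mpr ⟨i, hc, by simpa [hx i (by omega)] using hne⟩
    · exact absurd (htail i k hk) hne

theorem measure_center_true_inter_rays [IsProbabilityMeasure μ]
    (hhc : HardCore (starGraph d) μ J) (hdep : OneDependent (starGraph d) μ J)
    (hmeas : ∀ u, Measurable (J u))
    (hmarg : ∀ u u', μ {ω | J u ω = true} = μ {ω | J u' ω = true})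
    {n : Fin d → ℕ} {x : Fin d → ℕ → Bool} (hx : ∀ i, 1 ≤ n i → x i 0 = false) :
    μ ({ω | J none ω = true} ∩ {ω | ∀ i, ∀ k < n i, J (some (i, k)) ω = x i k})
      = μ {ω | J none ω = true}
        * ∏ i, μ {ω | ∀ k, k + 1 < n i → J (some (i, k)) ω = x i (k + 1)} := by
  rw [measure_center_true_inter_rays_eq_mul_tails hhc hdep hx,
    measure_rays_eq_prod hdep (fun i k => k + 1 < n i) (fun _ k => k + 1)]
  congr 1
  refine Finset.prod_congr rfl fun i _ => ?_
  simp_rw [← Nat.lt_sub_iff_add_lt]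
  exact measure_wordEvent_eq_of_isInducedRay hhc hdep hmeas hmarg
    ((isInducedRay_starGraph i).shift 1) (isInducedRay_starGraph i) _ _

end StarGraph

theorem cylinder_factorization_general (d : ℕ) (p : ℝ)
    (Ω : Type) [MeasurableSpace Ω] (μ : Measure Ω) [IsProbabilityMeasure μ]
    (J : Option (Fin d × ℕ) → Ω → Bool) (hmeas : ∀ v, Measurable (J v))
    (hhc : HardCore (starGraph d) μ J) (hdep : OneDependent (starGraph d) μ J)
    (hmarg : ∀ v, (μ {ω | J v ω = true}).toReal = p)
    (n : Fin d → ℕ) (x : Fin d → ℕ → Bool) :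
    ((∃ i, 1 ≤ n i ∧ x i 0 = true) →
      (μ {ω | J none ω = false ∧ ∀ i, ∀ k < n i, J (some (i, k)) ω = x i k}).toReal
        = ∏ i : Fin d, (μ {ω | ∀ k < n i, J (some (i, k)) ω = x i k}).toReal) ∧
    ((∀ i, 1 ≤ n i → x i 0 = false) →
      (μ {ω | J none ω = true ∧ ∀ i, ∀ k < n i, J (some (i, k)) ω = x i k}).toReal
        = p * ∏ i : Fin d,
            (μ {ω | ∀ k, k + 1 < n i → J (some (i, k)) ω = x i (k + 1)}).toReal) ∧
    ((∀ i, 1 ≤ n i → x i 0 = false) →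
      (μ {ω | J none ω = false ∧ ∀ i, ∀ k < n i, J (some (i, k)) ω = x i k}).toReal
        = (∏ i : Fin d, (μ {ω | ∀ k < n i, J (some (i, k)) ω = x i k}).toReal)
          - p * ∏ i : Fin d,
              (μ {ω | ∀ k, k + 1 < n i → J (some (i, k)) ω = x i (k + 1)}).toReal) := by
  have hmarg' : ∀ u u', μ {ω | J u ω = true} = μ {ω | J u' ω = true} := fun u u' =>
    (ENNReal.toReal_eq_toReal_iff' (measure_ne_top μ _) (measure_ne_top μ _)).mp
      ((hmarg u).trans (hmarg u').symm)
  simp only [Set.ofPred_and]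
  set E := {ω | ∀ i, ∀ k < n i, J (some (i, k)) ω = x i k}
  have hsplit := measure_true_inter_add_false_inter (μ := μ) (hmeas none) E
  have hE : μ E = ∏ i, μ {ω | ∀ k < n i, J (some (i, k)) ω = x i k} :=
    measure_rays_eq_prod hdep (fun i k => k < n i) (fun _ k => k) x
  have hcenter := measure_center_true_inter_rays hhc hdep hmeas hmarg' (n := n) (x := x)
  refine ⟨fun ⟨i, hi, hxi⟩ => ?_, fun hx => ?_, fun hx => ?_⟩
  · have hnull : μ ({ω | J none ω = true} ∩ E) = 0 :=
      measure_mono_null (fun ω ⟨hc, hω⟩ => And.intro hc (hxi ▸ hω i 0 hi))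
        (hhc none (some (i, 0)) (by simp))
    rw [← ENNReal.toReal_prod, ← hE, ← hsplit, hnull, zero_add]
  · rw [hcenter hx, ENNReal.toReal_mul, hmarg, ENNReal.toReal_prod]
  · have hreal := congrArg ENNReal.toReal hsplit
    rw [ENNReal.toReal_add (measure_ne_top μ _) (measure_ne_top μ _), hcenter hx,
      ENNReal.toReal_mul, hmarg, hE, ENNReal.toReal_prod, ENNReal.toReal_prod] at hreal
    linarith

/-- Cylinder probabilities of a 1-dependent hard-core process on the
`d`-ray star graph factorize as stated: with rays carrying the words
`x i 0, …, x i (n i - 1)` and `P_i`, `P̂_i` the corresponding ray probabilities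
(`P̂_i` for the word with its first letter deleted), the probability of the full
cylinder is `∏ P_i` when some ray starts with a `1`, and equals `p ∏ P̂_i`
(resp. `∏ P_i - p ∏ P̂_i`) when all rays start with `0` and the center is `1`
(resp. `0`). -/
theorem cylinder_factorization (d : ℕ) (hd : 2 ≤ d) (p : ℝ)
    (Ω : Type) [MeasurableSpace Ω] (μ : Measure Ω) [IsProbabilityMeasure μ]
    (J : Option (Fin d × ℕ) → Ω → Bool) (hmeas : ∀ v, Measurable (J v))
    (hhc : HardCore (starGraph d) μ J) (hdep : OneDependent (starGraph d) μ J)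
    (hmarg : ∀ v, (μ {ω | J v ω = true}).toReal = p)
    (n : Fin d → ℕ) (x : Fin d → ℕ → Bool) :
    ((∃ i, 1 ≤ n i ∧ x i 0 = true) →
      (μ {ω | J none ω = false ∧ ∀ i, ∀ k < n i, J (some (i, k)) ω = x i k}).toReal
        = ∏ i : Fin d, (μ {ω | ∀ k < n i, J (some (i, k)) ω = x i k}).toReal) ∧
    ((∀ i, 1 ≤ n i → x i 0 = false) →
      (μ {ω | J none ω = true ∧ ∀ i, ∀ k < n i, J (some (i, k)) ω = x i k}).toReal
        = p * ∏ i : Fin d,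
            (μ {ω | ∀ k, k + 1 < n i → J (some (i, k)) ω = x i (k + 1)}).toReal) ∧
    ((∀ i, 1 ≤ n i → x i 0 = false) →
      (μ {ω | J none ω = false ∧ ∀ i, ∀ k < n i, J (some (i, k)) ω = x i k}).toReal
        = (∏ i : Fin d, (μ {ω | ∀ k < n i, J (some (i, k)) ω = x i k}).toReal)
          - p * ∏ i : Fin d,
              (μ {ω | ∀ k, k + 1 < n i → J (some (i, k)) ω = x i (k + 1)}).toReal) :=
  cylinder_factorization_general d p Ω μ J hmeas hhc hdep hmarg n x
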